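/- Let n = 2k with k ≥ 1, and define the Boolean function f_n : {0,1}ⁿ → {0,1} by f_n(x) = 1 if and only if |x| ≥ k+1, or (|x| ≥ k and for every j ∈ {1,…,k} not both x_{2j−1} = 1 and x_{2j} = 1), where |x| = Σᵢ xᵢ. Define the real polynomial p(x) = Σ_{i=1}^{n} xᵢ − (1/k) Σ_{j=1}^{k} x_{2j−1} x_{2j} − k. Then for every x ∈ {0,1}ⁿ, f_n(x) = 1 if and only if p(x) ≥ 0. In particular, f_n is a quadratic threshold function whose representing polynomial has n + k + 1 terms, i.e., O(n) terms. -/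

import Mathlib

open Finset

/-- Evaluation of a multilinear real polynomial in `n` variables given by its coefficient
function `c` (where `c S` is the coefficient of the monomial `∏ i ∈ S, x i`). -/
noncomputable def mEval {n : ℕ} (c : Finset (Fin n) → ℝ) (x : Fin n → ℝ) : ℝ :=
  ∑ S : Finset (Fin n), c S * ∏ i ∈ S, x i

/-- The real value of a Boolean. -/
noncomputable def bval (b : Bool) : ℝ := if b then 1 else 0

/-- The weight (number of ones) of a Boolean vector. -/
def wt {n : ℕ} (x : Fin n → Bool) : ℕ := ∑ i, if x i then 1 else 0

-- The number of terms (size) of a multilinear polynomial given by its coefficients.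
open Classical in
noncomputable def nTerms {n : ℕ} (c : Finset (Fin n) → ℝ) : ℕ :=
  (Finset.univ.filter (fun S => c S ≠ 0)).card

/-! With `w = |x|` and `m` the number of blocks `{2j, 2j+1}` on which `x` is all ones, we have
`p(x) = w - k - m / k` with `0 ≤ m ≤ k`, so the quadratic correction lies in `[0, 1]`. Since `w` is
an integer, `p(x) ≥ 0` exactly when `w ≥ k + 1`, or `w = k` and `m = 0`, which is `f_n(x) = 1`. -/

lemma threshold_iff_of_le {k w m : ℕ} (hm : m ≤ k) :
    (k + 1 ≤ w ∨ (k ≤ w ∧ m = 0)) ↔ 0 ≤ (w : ℝ) - 1 / k * m - k := by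
  obtain rfl | hk := k.eq_zero_or_pos
  · obtain rfl : m = 0 := by omega
    simp
  have hk' : (0 : ℝ) < k := by exact_mod_cast hk
  rw [show (w : ℝ) - 1 / k * m - k = (k * (w - k) - m) / k by field_simp; ring, div_nonneg_iff]
  simp only [hk'.not_ge, and_false, or_false, hk'.le, and_true, sub_nonneg]
  rcases lt_trichotomy w k with hw | rfl | hw
  · have : (w : ℝ) + 1 ≤ k := by exact_mod_cast hw
    have : (0 : ℝ) ≤ m := m.cast_nonneg
    constructor
    · omega
    · intro h; nlinarith
  · simp
  · have : (k : ℝ) + 1 ≤ w := by exact_mod_cast hw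
    have : (m : ℝ) ≤ k := by exact_mod_cast hm
    constructor
    · intro; nlinarith
    · omega

lemma threshold_iff_forall_not {k w : ℕ} {P : Fin k → Prop} [DecidablePred P] :
    (k + 1 ≤ w ∨ (k ≤ w ∧ ∀ j, ¬ P j)) ↔ 0 ≤ (w : ℝ) - 1 / k * #{j | P j} - k := by
  rw [← threshold_iff_of_le ((card_filter_le _ _).trans_eq (card_fin k))]
  simp [Finset.card_eq_zero, filter_eq_empty_iff]

lemma sum_bval_eq_card {ι : Type*} [Fintype ι] (b : ι → Bool) :
    ∑ i, bval (b i) = #{i | b i = true} := by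
  simp [bval, Finset.sum_boole]

lemma bval_mul_bval (a b : Bool) : bval a * bval b = bval (a && b) := by
  cases a <;> cases b <;> simp [bval]

lemma sum_bval_mul_bval {ι : Type*} [Fintype ι] (b c : ι → Bool) :
    ∑ i, bval (b i) * bval (c i) = #{i | b i = true ∧ c i = true} := by
  simp [bval_mul_bval, sum_bval_eq_card]

lemma wt_eq_card {n : ℕ} (x : Fin n → Bool) : wt x = #{i | x i = true} := by
  simp [wt, Finset.sum_boole]

section ExtendByZero

variable {n : ℕ} {ι : Type*} [Fintype ι] {g : ι → Finset (Fin n)}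

lemma exists_eq_of_extend_ne_zero {w : ι → ℝ} {S : Finset (Fin n)}
    (h : Function.extend g w 0 S ≠ 0) : ∃ t, g t = S := by
  by_contra hS
  exact h (Function.extend_apply' _ _ _ hS)

lemma mEval_extend (hg : g.Injective) (w : ι → ℝ) (x : Fin n → ℝ) :
    mEval (Function.extend g w 0) x = ∑ t, w t * ∏ i ∈ g t, x i :=
  (Fintype.sum_of_injective g hg _ _
    (fun S hS => by rw [Function.extend_apply' _ _ _ hS, Pi.zero_apply, zero_mul])
    (fun t => by rw [hg.extend_apply])).symm

lemma nTerms_extend (hg : g.Injective) {w : ι → ℝ} (hw : ∀ t, w t ≠ 0) :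
    nTerms (Function.extend g w 0) = Fintype.card ι := by
  classical
  have hsupp : univ.filter (fun S => Function.extend g w 0 S ≠ 0) = univ.image g := by
    ext S
    simp only [mem_filter, mem_univ, true_and, mem_image]
    refine ⟨exists_eq_of_extend_ne_zero, ?_⟩
    rintro ⟨t, rfl⟩
    rw [hg.extend_apply]
    exact hw t
  rw [nTerms, Finset.filter_congr_decidable, hsupp, card_image_of_injective _ hg, card_univ]

end ExtendByZero

section Monomials

variable (k : ℕ)

lemma two_mul_val_lt (j : Fin k) : 2 * (j : ℕ) < 2 * k := by omega

lemma two_mul_val_add_one_lt (j : Fin k) : 2 * (j : ℕ) + 1 < 2 * k := by omega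

def pairBlock (j : Fin k) : Finset (Fin (2 * k)) :=
  {⟨2 * j, two_mul_val_lt k j⟩, ⟨2 * j + 1, two_mul_val_add_one_lt k j⟩}

lemma card_pairBlock (j : Fin k) : #(pairBlock k j) = 2 :=
  card_pair (by simp [Fin.ext_iff])

lemma pairBlock_injective : (pairBlock k).Injective := by
  intro j j' h
  have : (⟨2 * j, two_mul_val_lt k j⟩ : Fin (2 * k)) ∈ pairBlock k j' := h ▸ mem_insert_self _ _
  simp only [pairBlock, mem_insert, mem_singleton, Fin.ext_iff] at this
  exact Fin.ext (by omega)

-- The monomials of `p`: the constant, the `2k` variables and the `k` block products.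
def fnMonomial : Option (Fin (2 * k) ⊕ Fin k) → Finset (Fin (2 * k))
  | none => ∅
  | some (.inl i) => {i}
  | some (.inr j) => pairBlock k j

noncomputable def fnWeight : Option (Fin (2 * k) ⊕ Fin k) → ℝ
  | none => -k
  | some (.inl _) => 1
  | some (.inr _) => -(1 / k)

lemma card_fnMonomial_le (t : Option (Fin (2 * k) ⊕ Fin k)) : #(fnMonomial k t) ≤ 2 := by
  rcases t with _ | i | j <;> simp [fnMonomial, card_pairBlock]

lemma fnMonomial_injective : (fnMonomial k).Injective := by
  rintro (_ | i | j) (_ | i' | j') h <;> have hcard := congrArg card h <;>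
    simp only [fnMonomial, card_pairBlock, card_empty, card_singleton] at h hcard <;>
    first | omega | simp_all [(pairBlock_injective k).eq_iff]

lemma fnWeight_ne_zero (hk : 1 ≤ k) (t : Option (Fin (2 * k) ⊕ Fin k)) : fnWeight k t ≠ 0 := by
  have : (k : ℝ) ≠ 0 := by positivity
  rcases t with _ | i | j <;> simp [fnWeight, this]

lemma mEval_extend_fnWeight (x : Fin (2 * k) → ℝ) :
    mEval (Function.extend (fnMonomial k) (fnWeight k) 0) x =
      (∑ i, x i) - 1 / k *
        (∑ j : Fin k, x ⟨2 * j, two_mul_val_lt k j⟩ * x ⟨2 * j + 1, two_mul_val_add_one_lt k j⟩) -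
        k := by
  rw [mEval_extend (fnMonomial_injective k), Fintype.sum_option, Fintype.sum_sum_type]
  simp [fnWeight, fnMonomial, pairBlock, Fin.ext_iff, mul_sum]
  ring

end Monomials

/-- Variables are indexed `0, …, 2k-1`; the paper's `j`-th block `{x_{2j-1}, x_{2j}}` is
`{2j, 2j+1}` here. -/
theorem f_n_is_small_qtf (k : ℕ) (hk : 1 ≤ k) (f : (Fin (2 * k) → Bool) → Bool)
    (hf : ∀ x, f x = true ↔
      (k + 1 ≤ wt x ∨ (k ≤ wt x ∧
        ∀ j : Fin k, ¬(x ⟨2 * j, by omega⟩ = true ∧ x ⟨2 * j + 1, by omega⟩ = true)))) :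
    (∀ x : Fin (2 * k) → Bool,
      f x = true ↔
        0 ≤ (∑ i, bval (x i))
            - (1 / (k : ℝ)) * (∑ j : Fin k, bval (x ⟨2 * j, by omega⟩) * bval (x ⟨2 * j + 1, by omega⟩))
            - (k : ℝ)) ∧
    ∃ coef : Finset (Fin (2 * k)) → ℝ,
      (∀ T, coef T ≠ 0 → T.card ≤ 2) ∧
      nTerms coef = 2 * k + k + 1 ∧
      (∀ x : Fin (2 * k) → Bool,
        mEval coef (fun i => bval (x i)) =
          (∑ i, bval (x i))
            - (1 / (k : ℝ)) * (∑ j : Fin k, bval (x ⟨2 * j, by omega⟩) * bval (x ⟨2 * j + 1, by omega⟩))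
            - (k : ℝ)) := by
  refine ⟨fun x => ?_, Function.extend (fnMonomial k) (fnWeight k) 0, ?_, ?_,
    fun x => mEval_extend_fnWeight k _⟩
  · rw [hf x, sum_bval_eq_card, sum_bval_mul_bval, ← wt_eq_card]
    exact threshold_iff_forall_not
  · intro T hT
    obtain ⟨t, rfl⟩ := exists_eq_of_extend_ne_zero hT
    exact card_fnMonomial_le k t
  · rw [nTerms_extend (fnMonomial_injective k) (fnWeight_ne_zero k hk)]
    simp [Fintype.card_option, Fintype.card_sum]
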